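/- Let p be a prime, s ∈ ℤ_{≥1}, a_0,…,a_{r−1} ∈ ℤ_p, and put h(t) := Π_{i=0}^{r−1} F_{a_i,…,a_i}(t)_{<p} ∈ ℤ_p[t]. Then for every n ≥ 1 the Laurent polynomial h(t^{−1}) is a unit in R_n := (W/p^nW)[t, t^{−1}, h(t)^{−1}]; consequently there is a ring homomorphism ω_n: R_n → R_n over W/p^nW with ω_n(f(t)) = f(t^{−1}) for Laurent polynomials f, and the ω_n are compatible with the reductions R_{n+1} → R_n and induce a ring involution ω of W⟨t, t^{−1}, h(t)^{−1}⟩ := lim←_n R_n with ω(f(t)) = f(t^{−1}). -/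

import Mathlib

open scoped Classical


namespace HGP

/-- `𝔽̄_p`, an algebraic closure of the prime field `𝔽_p`. -/
abbrev Fbar (p : ℕ) [Fact p.Prime] : Type _ := AlgebraicClosure (ZMod p)

/-- `W = W(𝔽̄_p)`, the ring of Witt vectors of `𝔽̄_p`. -/
abbrev Wp (p : ℕ) [Fact p.Prime] : Type _ := WittVector p (Fbar p)

/-- `K = Frac W`. -/
abbrev Kp (p : ℕ) [Fact p.Prime] : Type _ := FractionRing (Wp p)

/-- The canonical embedding `ℤ_p = W(𝔽_p) → W(𝔽̄_p)`. -/
noncomputable def iota (p : ℕ) [Fact p.Prime] : ℤ_[p] →+* Wp p :=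
  (WittVector.map (algebraMap (ZMod p) (Fbar p))).comp (WittVector.equiv p).symm.toRingHom

/-- The canonical embedding `W → K`. -/
noncomputable def iotaK (p : ℕ) [Fact p.Prime] : Wp p →+* Kp p := algebraMap (Wp p) (Kp p)

/-- `l`: the unique integer in `{0,…,p−1}` with `a + l ≡ 0 mod p`. -/
noncomputable def dl (p : ℕ) [Fact p.Prime] (a : ℤ_[p]) : ℕ := (-a).appr 1

/-- `q := 4` if `p = 2` and `q := p` otherwise. -/
def qq (p : ℕ) : ℕ := if p = 2 then 4 else p

/-- `l′`: the unique integer in `{0,…,q−1}` with `a + l′ ≡ 0 mod q`. -/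
noncomputable def dl' (p : ℕ) [Fact p.Prime] (a : ℤ_[p]) : ℕ :=
  (-a).appr (if p = 2 then 2 else 1)

/-- `e := l′ − ⌊l′/p⌋`. -/
noncomputable def de (p : ℕ) [Fact p.Prime] (a : ℤ_[p]) : ℕ := dl' p a - dl' p a / p

/-- `a ∈ ℤ_p ∖ ℤ_{≤0}`, i.e. `a` is not a nonpositive rational integer. -/
def NotNonposInt (p : ℕ) [Fact p.Prime] (a : ℤ_[p]) : Prop := ∀ n : ℕ, a + (n : ℤ_[p]) ≠ 0

/-- `a′` is the Dwork prime of `a`, i.e. `p·a′ = a + l`. -/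
def IsDworkPrime (p : ℕ) [Fact p.Prime] (a a' : ℤ_[p]) : Prop :=
  (p : ℤ_[p]) * a' = a + (dl p a : ℤ_[p])

/-- `A k = ((a)_k / k!)^s ∈ ℤ_p`, characterized by `k!^s · A k = ((a)_k)^s`. -/
def IsHGCoeff (p : ℕ) [Fact p.Prime] (s : ℕ) (a : ℤ_[p]) (A : ℕ → ℤ_[p]) : Prop :=
  ∀ k : ℕ, (k.factorial : ℤ_[p]) ^ s * A k = ((ascPochhammer ℤ_[p] k).eval a) ^ s

/-- `f = (α ↦ c^α)` for `c ∈ 1 + pW`: `c^α` is uniquely characterized by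
`c^α ≡ c^{α_n} mod p^n W` for any natural approximation `α_n` of `α` mod `p^n`. -/
def IsCpow (p : ℕ) [Fact p.Prime] (c : Wp p) (f : ℤ_[p] → Wp p) : Prop :=
  ∀ (α : ℤ_[p]) (n : ℕ), f α - c ^ (α.appr n) ∈ Ideal.span {(p : Wp p) ^ n}

/-- The coefficients `B_k` of `Ĝ^{(σ)}_{a,…,a}(t)`, as elements of `K = Frac W`:
`B_k = (k+a)⁻¹ (A_k − (−1)^{se} A^{(1)}_{(k−l)/p} c^{(k−l)/p + a′})`. -/
noncomputable def BhatK (p : ℕ) [Fact p.Prime] (s : ℕ) (a a' : ℤ_[p]) (A A1 : ℕ → ℤ_[p])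
    (cpw : ℤ_[p] → Wp p) (k : ℕ) : Kp p :=
  ((k : Kp p) + iotaK p (iota p a))⁻¹ *
    (iotaK p (iota p (A k)) -
      (if dl p a ≤ k ∧ p ∣ (k - dl p a) then
        (-1 : Kp p) ^ (s * de p a) * iotaK p (iota p (A1 ((k - dl p a) / p))) *
          iotaK p (cpw ((((k - dl p a) / p : ℕ) : ℤ_[p]) + a'))
      else 0))

/-- `B : ℕ → W` is the coefficient function of `Ĝ^{(σ)}_{a,…,a}(t)`, characterized in `W` by
`(k+a)·B_k = A_k − (−1)^{se} A^{(1)}_{(k−l)/p} c^{(k−l)/p + a′}`. -/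
def IsBhat (p : ℕ) [Fact p.Prime] (s : ℕ) (a a' : ℤ_[p]) (A A1 : ℕ → ℤ_[p])
    (cpw : ℤ_[p] → Wp p) (B : ℕ → Wp p) : Prop :=
  ∀ k : ℕ, ((k : Wp p) + iota p a) * B k =
    iota p (A k) -
      (if dl p a ≤ k ∧ p ∣ (k - dl p a) then
        (-1 : Wp p) ^ (s * de p a) * iota p (A1 ((k - dl p a) / p)) *
          cpw ((((k - dl p a) / p : ℕ) : ℤ_[p]) + a')
      else 0)

/-- A function `ℕ → K` is Lipschitz: it takes values in `W` and
`p^m ∣ (n − n′)` implies `f n − f n′ ∈ p^m W`. -/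
def LipschitzSeq (p : ℕ) [Fact p.Prime] (f : ℕ → Kp p) : Prop :=
  (∀ n : ℕ, f n ∈ (iotaK p).range) ∧
    ∀ n n' m : ℕ, ((p : ℤ) ^ m ∣ (n : ℤ) - (n' : ℤ)) →
      ∃ w : Wp p, f n - f n' = (p : Kp p) ^ m * iotaK p w

/-- `L` is the `p`-adic limit of the sequence `s` in `W`. -/
def WLim (p : ℕ) [Fact p.Prime] (s : ℕ → Wp p) (L : Wp p) : Prop :=
  ∀ m : ℕ, ∃ M : ℕ, ∀ n ≥ M, L - s n ∈ Ideal.span {(p : Wp p) ^ m}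

/-- `{α}_k := Π_{1 ≤ i ≤ k, p ∤ (α+i−1)} (α+i−1)`. -/
noncomputable def curly (p : ℕ) [Fact p.Prime] (α : ℤ_[p]) (k : ℕ) : ℤ_[p] :=
  ∏ j ∈ Finset.range k, if (p : ℤ_[p]) ∣ (α + (j : ℤ_[p])) then 1 else (α + (j : ℤ_[p]))

/-- `W/p^n W`. -/
abbrev Qn (p : ℕ) [Fact p.Prime] (n : ℕ) := Wp p ⧸ Ideal.span {(p : Wp p) ^ n}

/-- Laurent polynomials over `W/p^n`, obtained from polynomials over `W`. -/
noncomputable def laurentOfPolyW (p : ℕ) [Fact p.Prime] (n : ℕ) :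
    Polynomial (Wp p) →+* LaurentPolynomial (Qn p n) :=
  (Polynomial.toLaurent).comp
    (Polynomial.mapRingHom (Ideal.Quotient.mk (Ideal.span {(p : Wp p) ^ n})))

/-- `R_n := (W/p^n)[t,t⁻¹, h(t)⁻¹]`, the localization of the Laurent polynomial ring
over `W/p^n` away from (the image of) `h`. -/
abbrev Rn (p : ℕ) [Fact p.Prime] (h : Polynomial (Wp p)) (n : ℕ) :=
  Localization.Away (laurentOfPolyW p n h)

/-- The canonical map from Laurent polynomials over `W/p^n` to `R_n`. -/
noncomputable def mkRn (p : ℕ) [Fact p.Prime] (h : Polynomial (Wp p)) (n : ℕ) :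
    LaurentPolynomial (Qn p n) →+* Rn p h n := algebraMap _ _

/-- The canonical map from polynomials over `W` to `R_n`. -/
noncomputable def toRn (p : ℕ) [Fact p.Prime] (h : Polynomial (Wp p)) (n : ℕ) :
    Polynomial (Wp p) →+* Rn p h n := (mkRn p h n).comp (laurentOfPolyW p n)

/-!
Let `l ∈ {0,…,p-1}` with `a + l ≡ 0 (mod p)`. Modulo `p`,
`(a)_k / k! ≡ (-l)_k / k! = (-1)^k C(l,k)`, so `F(t)_{<p}` is congruent to its truncation `G(t)`
of degree `l`, and `G` is palindromic up to the unit `A_l`: `A_{l-k} ≡ A_l A_k`. Hence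
`t^l F(t⁻¹)_{<p} ≡ A_l F(t)_{<p} (mod p)`, and taking the product over the factors, `h(t⁻¹)`
differs from a unit of `R_n` by a multiple of the nilpotent element `p`, so it is a unit.
The `ω_n` then come from the universal property of the localization, and all identities
between them are checked on constants and on `t`.
-/

section Coefficients

variable {p : ℕ} [Fact p.Prime] {s : ℕ} {a : ℤ_[p]} {A : ℕ → ℤ_[p]}

theorem dl_lt (a : ℤ_[p]) : dl p a < p := by simpa [dl] using PadicInt.appr_lt (-a) 1

theorem toZMod_eq_neg_dl (a : ℤ_[p]) : PadicInt.toZMod a = -(dl p a : ZMod p) := by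
  have h := PadicInt.appr_spec 1 (-a)
  rw [pow_one, ← PadicInt.maximalIdeal_eq_span_p, ← PadicInt.ker_toZMod, RingHom.mem_ker,
    map_sub, map_neg, map_natCast, sub_eq_zero] at h
  rw [dl, ← h, neg_neg]

theorem factorial_ne_zero_of_lt {k : ℕ} (hk : k < p) : (k.factorial : ZMod p) ≠ 0 := by
  rw [Ne, ZMod.natCast_eq_zero_iff, (Fact.out : p.Prime).dvd_factorial]
  omega

theorem IsHGCoeff.factorial_pow_mul_toZMod (hA : IsHGCoeff p s a A) (k : ℕ) :
    (k.factorial : ZMod p) ^ s * PadicInt.toZMod (A k) =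
      ((ascPochhammer (ZMod p) k).eval (-(dl p a : ZMod p))) ^ s := by
  have h := congrArg PadicInt.toZMod (hA k)
  rw [map_mul, map_pow, map_natCast, map_pow] at h
  rw [h, ← toZMod_eq_neg_dl, ← ascPochhammer_map PadicInt.toZMod, Polynomial.eval_map,
    Polynomial.eval₂_at_apply]

theorem IsHGCoeff.toZMod_eq (hA : IsHGCoeff p s a A) {k : ℕ} (hk : k ≤ dl p a) :
    PadicInt.toZMod (A k) = ((-1) ^ k * ((dl p a).choose k : ZMod p)) ^ s := by
  have h := hA.factorial_pow_mul_toZMod k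
  rw [ascPochhammer_eval_neg_eq_descPochhammer, descPochhammer_eval_eq_descFactorial,
    Nat.descFactorial_eq_factorial_mul_choose] at h
  refine mul_left_cancel₀ (pow_ne_zero s (factorial_ne_zero_of_lt (hk.trans_lt (dl_lt a)))) ?_
  rw [h]
  push_cast
  ring

theorem IsHGCoeff.toZMod_eq_zero (hs : s ≠ 0) (hA : IsHGCoeff p s a A) {k : ℕ}
    (hlk : dl p a < k) (hkp : k < p) : PadicInt.toZMod (A k) = 0 := by
  have h := hA.factorial_pow_mul_toZMod k
  rw [ascPochhammer_eval_neg_coe_nat_of_lt hlk, zero_pow hs] at h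
  exact (mul_eq_zero.mp h).resolve_left (pow_ne_zero s (factorial_ne_zero_of_lt hkp))

theorem IsHGCoeff.toZMod_dl_sub (hA : IsHGCoeff p s a A) {k : ℕ} (hk : k ≤ dl p a) :
    PadicInt.toZMod (A (dl p a - k)) = PadicInt.toZMod (A (dl p a)) * PadicInt.toZMod (A k) := by
  rw [hA.toZMod_eq (Nat.sub_le _ _), hA.toZMod_eq le_rfl, hA.toZMod_eq hk, Nat.choose_symm hk,
    Nat.choose_self, ← mul_pow]
  congr 1
  have hsign : ((-1 : ZMod p)) ^ (dl p a - k) = (-1) ^ dl p a * (-1) ^ k := by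
    rw [← pow_add, (by omega : dl p a + k = dl p a - k + 2 * k), pow_add, pow_mul, neg_one_sq,
      one_pow, mul_one]
  rw [hsign]
  push_cast
  ring

theorem IsHGCoeff.isUnit_dl (hA : IsHGCoeff p s a A) : IsUnit (A (dl p a)) := by
  by_contra hu
  have hmem : A (dl p a) ∈ IsLocalRing.maximalIdeal ℤ_[p] := hu
  rw [← PadicInt.ker_toZMod, RingHom.mem_ker, hA.toZMod_eq le_rfl, Nat.choose_self,
    Nat.cast_one, mul_one] at hmem
  exact (isUnit_one.neg.pow _).pow _ |>.ne_zero hmem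

end Coefficients

section TruncatedSeries

open Polynomial

variable {p : ℕ} [Fact p.Prime] {s : ℕ} {a : ℤ_[p]} {A : ℕ → ℤ_[p]}

theorem eval₂_smodEq_of_map_toZMod_eq {S : Type*} [CommRing S] (φ : ℤ_[p] →+* S) (x : S)
    {P Q : ℤ_[p][X]} (h : P.map PadicInt.toZMod = Q.map PadicInt.toZMod) :
    P.eval₂ φ x ≡ Q.eval₂ φ x [SMOD Ideal.span {(p : S)}] := by
  have hPQ : P - Q ∈ (Ideal.span {(p : ℤ_[p])}).map C := by
    refine Ideal.mem_map_C_iff.mpr fun i => ?_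
    rw [← PadicInt.maximalIdeal_eq_span_p, ← PadicInt.ker_toZMod, RingHom.mem_ker, coeff_sub,
      map_sub, ← coeff_map, ← coeff_map, h, sub_self]
  have := Ideal.mem_map_of_mem (eval₂RingHom φ x) hPQ
  rw [Ideal.map_map, Ideal.map_span, Set.image_singleton, RingHom.comp_apply, coe_eval₂RingHom,
    eval₂_C, map_natCast, eval₂_sub] at this
  exact SModEq.sub_mem.mpr this

theorem IsHGCoeff.map_trunc_eq (hs : s ≠ 0) (hA : IsHGCoeff p s a A) :
    ((PowerSeries.mk A).trunc p).map PadicInt.toZMod =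
      ((PowerSeries.mk A).trunc (dl p a + 1)).map PadicInt.toZMod := by
  ext k
  simp only [coeff_map, PowerSeries.coeff_trunc, PowerSeries.coeff_mk]
  have := dl_lt a
  split_ifs with hkp hkl hkl
  · rfl
  · rw [hA.toZMod_eq_zero hs (by omega) hkp, map_zero]
  · omega
  · rfl

theorem IsHGCoeff.map_reflect_trunc (hA : IsHGCoeff p s a A) :
    (((PowerSeries.mk A).trunc (dl p a + 1)).reflect (dl p a)).map PadicInt.toZMod =
      (C (A (dl p a)) * (PowerSeries.mk A).trunc (dl p a + 1)).map PadicInt.toZMod := by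
  ext k
  simp only [coeff_map, coeff_reflect, coeff_C_mul, PowerSeries.coeff_trunc, PowerSeries.coeff_mk]
  rcases le_or_gt k (dl p a) with hk | hk
  · rw [revAt_le hk, if_pos (by omega), if_pos (by omega), map_mul, hA.toZMod_dl_sub hk]
  · rw [revAt_eq_self_of_lt hk, if_neg (by omega), mul_zero]

theorem IsHGCoeff.pow_mul_eval₂_inv_smodEq (hs : s ≠ 0) (hA : IsHGCoeff p s a A) {S : Type*}
    [CommRing S] (φ : ℤ_[p] →+* S) {x y : S} (hxy : x * y = 1) :
    x ^ dl p a * ((PowerSeries.mk A).trunc p).eval₂ φ y ≡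
      φ (A (dl p a)) * ((PowerSeries.mk A).trunc p).eval₂ φ x [SMOD Ideal.span {(p : S)}] := by
  set Q := (PowerSeries.mk A).trunc (dl p a + 1)
  have hQ : Q.natDegree ≤ dl p a := Nat.lt_succ_iff.mp (PowerSeries.natDegree_trunc_lt _ _)
  have hPQ (z : S) := eval₂_smodEq_of_map_toZMod_eq φ z (hA.map_trunc_eq hs)
  calc x ^ dl p a * ((PowerSeries.mk A).trunc p).eval₂ φ y
      ≡ x ^ dl p a * Q.eval₂ φ y [SMOD Ideal.span {(p : S)}] := SModEq.mul SModEq.rfl (hPQ y)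
    _ = (Q.reflect (dl p a)).eval₂ φ x := by
        have : Invertible y := invertibleOfLeftInverse y x hxy
        rw [← eval₂_reflect_mul_pow φ y (dl p a) Q hQ, invOf_eq_left_inv hxy, mul_left_comm,
          ← mul_pow, hxy, one_pow, mul_one]
    _ ≡ (C (A (dl p a)) * Q).eval₂ φ x [SMOD Ideal.span {(p : S)}] :=
        eval₂_smodEq_of_map_toZMod_eq φ x hA.map_reflect_trunc
    _ = φ (A (dl p a)) * Q.eval₂ φ x := by rw [eval₂_mul, eval₂_C]
    _ ≡ φ (A (dl p a)) * ((PowerSeries.mk A).trunc p).eval₂ φ x [SMOD Ideal.span {(p : S)}] :=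
        SModEq.mul SModEq.rfl (hPQ x).symm

end TruncatedSeries

theorem IsHGCoeff.pow_mul_eval₂_inv_prod_smodEq {p : ℕ} [Fact p.Prime] {s : ℕ} (hs : s ≠ 0)
    {ι : Type*} (t : Finset ι) {a : ι → ℤ_[p]} {A : ι → ℕ → ℤ_[p]}
    (hA : ∀ i, IsHGCoeff p s (a i) (A i)) {S : Type*} [CommRing S] (φ : ℤ_[p] →+* S)
    {x y : S} (hxy : x * y = 1) :
    x ^ (∑ i ∈ t, dl p (a i)) * (∏ i ∈ t, (PowerSeries.mk (A i)).trunc p).eval₂ φ y ≡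
      φ (∏ i ∈ t, A i (dl p (a i))) *
        (∏ i ∈ t, (PowerSeries.mk (A i)).trunc p).eval₂ φ x [SMOD Ideal.span {(p : S)}] := by
  simp only [Polynomial.eval₂_finsetProd, map_prod, ← Finset.prod_pow_eq_pow_sum,
    ← Finset.prod_mul_distrib]
  exact SModEq.prod fun i _ => (hA i).pow_mul_eval₂_inv_smodEq hs φ hxy

theorem isUnit_of_smodEq_of_isNilpotent {S : Type*} [CommRing S] {c y z : S}
    (hc : IsNilpotent c) (h : y ≡ z [SMOD Ideal.span {c}]) (hz : IsUnit z) : IsUnit y := by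
  obtain ⟨e, he⟩ := Ideal.mem_span_singleton.mp (SModEq.sub_mem.mp h)
  have hyz : IsNilpotent (y - z) := he ▸ (Commute.all c e).isNilpotent_mul_right hc
  simpa using hyz.isUnit_add_left_of_commute hz (Commute.all _ _)

section LaurentEval

open LaurentPolynomial

variable {R S : Type*} [CommSemiring R] [CommSemiring S] (g : R[T;T⁻¹] →+* S)

theorem map_toLaurent_eq_eval₂ (f : Polynomial R) :
    g (Polynomial.toLaurent f) = f.eval₂ (g.comp C) (g (T 1)) := by
  induction f using Polynomial.induction_on' with
  | add f₁ f₂ h₁ h₂ => rw [map_add, map_add, h₁, h₂, Polynomial.eval₂_add]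
  | monomial k r =>
    rw [Polynomial.toLaurent_C_mul_T, Polynomial.eval₂_monomial, map_mul, ← map_pow, T_pow,
      mul_one, RingHom.comp_apply]

theorem map_invert_toLaurent_eq_eval₂ (f : Polynomial R) :
    g (invert (Polynomial.toLaurent f)) = f.eval₂ (g.comp C) (g (T (-1))) := by
  induction f using Polynomial.induction_on' with
  | add f₁ f₂ h₁ h₂ => rw [map_add, map_add, map_add, h₁, h₂, Polynomial.eval₂_add]
  | monomial k r =>
    rw [Polynomial.toLaurent_C_mul_T, Polynomial.eval₂_monomial, map_mul, map_mul, invert_C,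
      invert_T, ← map_pow, T_pow, mul_neg_one, RingHom.comp_apply]

end LaurentEval

section LocalizedLaurent

open LaurentPolynomial

variable {p : ℕ} [Fact p.Prime] {h : Polynomial (Wp p)} {n : ℕ}

theorem isNilpotent_natCast_Rn : IsNilpotent (p : Rn p h n) := by
  refine ⟨n, ?_⟩
  have h0 : Ideal.Quotient.mk (Ideal.span {(p : Wp p) ^ n}) ((p : Wp p) ^ n) = 0 :=
    Ideal.Quotient.eq_zero_iff_mem.mpr (Ideal.mem_span_singleton_self _)
  have := congrArg ((mkRn p h n).comp C) h0
  rwa [map_pow, map_natCast, map_pow, map_natCast, map_zero] at this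

theorem mkRn_T_mul_T_neg_one : mkRn p h n (T 1) * mkRn p h n (T (-1)) = 1 := by
  rw [← map_mul, ← T_add, add_neg_cancel, T_zero, map_one]

theorem isUnit_mkRn_invert {s : ℕ} (hs : s ≠ 0) {ι : Type*} (t : Finset ι)
    {a : ι → ℤ_[p]} {A : ι → ℕ → ℤ_[p]} (hA : ∀ i, IsHGCoeff p s (a i) (A i))
    (hh : h = (∏ i ∈ t, (PowerSeries.mk (A i)).trunc p).map (iota p)) :
    IsUnit (mkRn p h n (invert (laurentOfPolyW p n h))) := by
  set P := ∏ i ∈ t, (PowerSeries.mk (A i)).trunc p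
  set φ : ℤ_[p] →+* Rn p h n :=
    ((mkRn p h n).comp C).comp ((Ideal.Quotient.mk (Ideal.span {(p : Wp p) ^ n})).comp (iota p))
  have hlaurent : laurentOfPolyW p n h =
      Polynomial.toLaurent (P.map ((Ideal.Quotient.mk _).comp (iota p))) := by
    rw [hh, laurentOfPolyW, RingHom.comp_apply, Polynomial.coe_mapRingHom, Polynomial.map_map]
  have hP : mkRn p h n (laurentOfPolyW p n h) = P.eval₂ φ (mkRn p h n (T 1)) := by
    rw [← Polynomial.eval₂_map, ← map_toLaurent_eq_eval₂, ← hlaurent]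
  have hPinv :
      mkRn p h n (invert (laurentOfPolyW p n h)) = P.eval₂ φ (mkRn p h n (T (-1))) := by
    rw [← Polynomial.eval₂_map, ← map_invert_toLaurent_eq_eval₂, ← hlaurent]
  have hunit : IsUnit (φ (∏ i ∈ t, A i (dl p (a i))) * P.eval₂ φ (mkRn p h n (T 1))) := by
    refine .mul (.map φ (Finset.prod_induction _ IsUnit (fun _ _ => .mul) isUnit_one
      fun i _ => (hA i).isUnit_dl)) ?_
    rw [← hP]
    exact IsLocalization.Away.algebraMap_isUnit _
  rw [hPinv]
  exact isUnit_of_mul_isUnit_right <| isUnit_of_smodEq_of_isNilpotent isNilpotent_natCast_Rn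
    (IsHGCoeff.pow_mul_eval₂_inv_prod_smodEq hs t hA φ mkRn_T_mul_T_neg_one) hunit

end LocalizedLaurent

section Involution

open LaurentPolynomial

variable {p : ℕ} [Fact p.Prime] {h : Polynomial (Wp p)} {n : ℕ}

theorem toRn_C (w : Wp p) :
    toRn p h n (Polynomial.C w) = mkRn p h n (C (Ideal.Quotient.mk _ w)) := by
  simp [toRn, laurentOfPolyW]

theorem toRn_X : toRn p h n Polynomial.X = mkRn p h n (T 1) := by
  simp [toRn, laurentOfPolyW]

theorem Rn.ringHom_ext {S : Type*} [Semiring S] {F G : Rn p h n →+* S}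
    (hC : ∀ w, F (toRn p h n (Polynomial.C w)) = G (toRn p h n (Polynomial.C w)))
    (hX : F (toRn p h n Polynomial.X) = G (toRn p h n Polynomial.X)) : F = G := by
  refine IsLocalization.ringHom_ext (Submonoid.powers (laurentOfPolyW p n h)) ?_
  refine IsLocalization.ringHom_ext (Submonoid.powers (Polynomial.X : Polynomial (Qn p n))) ?_
  refine (RingHom.cancel_right (f := Polynomial.mapRingHom (Ideal.Quotient.mk _))
    (Polynomial.map_surjective _ Ideal.Quotient.mk_surjective)).mp ?_
  exact Polynomial.ringHom_ext hC hX

noncomputable def omegaRn (hu : IsUnit (mkRn p h n (invert (laurentOfPolyW p n h)))) :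
    Rn p h n →+* Rn p h n :=
  IsLocalization.Away.lift (g := (mkRn p h n).comp (invert (R := Qn p n)).toRingEquiv.toRingHom)
    (laurentOfPolyW p n h) hu

variable (hu : IsUnit (mkRn p h n (invert (laurentOfPolyW p n h))))

theorem omegaRn_mkRn (f : (Qn p n)[T;T⁻¹]) :
    omegaRn hu (mkRn p h n f) = mkRn p h n (invert f) :=
  IsLocalization.Away.lift_eq (S := Rn p h n) (laurentOfPolyW p n h) hu f

theorem omegaRn_toRn_C (w : Wp p) :
    omegaRn hu (toRn p h n (Polynomial.C w)) = toRn p h n (Polynomial.C w) := by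
  rw [toRn_C, omegaRn_mkRn, invert_C]

theorem omegaRn_toRn_X : omegaRn hu (toRn p h n Polynomial.X) = mkRn p h n (T (-1)) := by
  rw [toRn_X, omegaRn_mkRn, invert_T]

theorem omegaRn_comp_omegaRn : (omegaRn hu).comp (omegaRn hu) = RingHom.id _ := by
  refine Rn.ringHom_ext (fun w => ?_) ?_
  · simp only [RingHom.comp_apply, RingHom.id_apply, omegaRn_toRn_C]
  · rw [RingHom.comp_apply, RingHom.id_apply, omegaRn_toRn_X, omegaRn_mkRn, invert_T, neg_neg,
      toRn_X]

theorem comp_omegaRn_eq {m : ℕ} (hu' : IsUnit (mkRn p h m (invert (laurentOfPolyW p m h))))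
    (ρ : Rn p h m →+* Rn p h n) (hρ : ∀ f, ρ (toRn p h m f) = toRn p h n f)
    (hρT : ρ (mkRn p h m (T (-1))) = mkRn p h n (T (-1))) :
    ρ.comp (omegaRn hu') = (omegaRn hu).comp ρ := by
  refine Rn.ringHom_ext (fun w => ?_) ?_
  · rw [RingHom.comp_apply, RingHom.comp_apply, omegaRn_toRn_C, hρ, omegaRn_toRn_C]
  · rw [RingHom.comp_apply, RingHom.comp_apply, omegaRn_toRn_X, hρT, hρ, omegaRn_toRn_X]

end Involution

/-- `h(t⁻¹)` is a unit in `R_n = (W/p^n)[t,t⁻¹,h(t)⁻¹]` for every `n ≥ 1`;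
consequently there are ring homomorphisms `ω_n : R_n → R_n` with `ω_n(f(t)) = f(t⁻¹)`,
which are involutions, commute with the reduction maps `R_{n+1} → R_n`, and hence induce
a ring involution of `W⟨t,t⁻¹,h(t)⁻¹⟩ = lim← R_n` sending `f(t)` to `f(t⁻¹)`. -/
theorem statement16 (p : ℕ) [Fact p.Prime] (s : ℕ) (hs : 1 ≤ s) (r : ℕ)
    (aF : ℕ → ℤ_[p]) (AF : ℕ → ℕ → ℤ_[p]) (hAF : ∀ i, IsHGCoeff p s (aF i) (AF i))
    (hW : Polynomial (Wp p))
    (hhW : hW = (∏ i ∈ Finset.range r, (PowerSeries.mk (AF i)).trunc p).map (iota p)) :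
    (∀ n : ℕ, 1 ≤ n →
      IsUnit (mkRn p hW n (LaurentPolynomial.invert (laurentOfPolyW p n hW)))) ∧
    ∃ ω : ∀ n : ℕ, Rn p hW n →+* Rn p hW n,
      (∀ (n : ℕ) (f : LaurentPolynomial (Qn p n)),
        ω n (mkRn p hW n f) = mkRn p hW n (LaurentPolynomial.invert f)) ∧
      (∀ n : ℕ, (ω n).comp (ω n) = RingHom.id _) ∧
      (∀ ρ : (∀ n : ℕ, Rn p hW (n + 1) →+* Rn p hW n),
        (∀ (n : ℕ) (f : Polynomial (Wp p)), ρ n (toRn p hW (n + 1) f) = toRn p hW n f) →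
        (∀ n : ℕ, ρ n (mkRn p hW (n + 1) (LaurentPolynomial.T (-1))) =
          mkRn p hW n (LaurentPolynomial.T (-1))) →
        (∀ n : ℕ, (ρ n).comp (ω (n + 1)) = (ω n).comp (ρ n)) ∧
        (∀ x : (∀ n : ℕ, Rn p hW n), (∀ n, ρ n (x (n + 1)) = x n) →
          ∀ n, ρ n (ω (n + 1) (x (n + 1))) = ω n (x n))) := by
  have hu (n : ℕ) := isUnit_mkRn_invert (n := n) (by omega) (Finset.range r) hAF hhW
  refine ⟨fun n _ => hu n, fun n => omegaRn (hu n), fun n => omegaRn_mkRn (hu n),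
    fun n => omegaRn_comp_omegaRn (hu n), fun ρ hρ hρT => ?_⟩
  have hcomm (n : ℕ) := comp_omegaRn_eq (hu n) (hu (n + 1)) (ρ n) (hρ n) (hρT n)
  refine ⟨hcomm, fun x hx n => ?_⟩
  rw [← RingHom.comp_apply, hcomm, RingHom.comp_apply, hx]

end HGP
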